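/- Let a, c, e be nonnegative integers with a ≤ c and let S = {(b,d) ∈ ℤ≥0 × ℤ≥0 : b ≤ a, d ≤ a − b + c}. With area(b,d) = 2a − 2b + c − d and bounce(b,d) = 3b + d − a if 2(a − b) ≤ d, bounce(b,d) = 2b + ⌈d/2⌉ otherwise, the polynomial ∑_{(b,d)∈S} q^{area(b,d)} t^{bounce(b,d)} is symmetric in q and t. -/
import Mathlib

def phiB (a c b d : ℕ) : ℕ :=
  if 2 * (a - b) ≤ d then
    if d + 3 * b ≤ a + c then b
    else (2 * a + c - (2 * b + d)) - ((3 * a + c - (3 * b + d)) + 1) / 2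
  else
    if 2 * b + (d + 1) / 2 ≤ c then a - d / 2
    else (2 * a + c - (2 * b + d)) - ((2 * a + c - (2 * b + (d + 1) / 2)) + 1) / 2

def phiD (a c b d : ℕ) : ℕ :=
  if 2 * (a - b) ≤ d then
    if d + 3 * b ≤ a + c then 3 * a + c - (5 * b + d)
    else (3 * a + c - (3 * b + d)) - 2 * phiB a c b d
  else
    if 2 * b + (d + 1) / 2 ≤ c then c + 3 * (d / 2) - (2 * b + d)
    else (2 * a + c - (2 * b + (d + 1) / 2)) - 2 * phiB a c b d

section phi
variable {a c b d : ℕ}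

lemma phiB_1a (h1 : 2 * (a - b) ≤ d) (h2 : d + 3 * b ≤ a + c) : phiB a c b d = b := by
  unfold phiB; rw [if_pos h1, if_pos h2]
lemma phiD_1a (h1 : 2 * (a - b) ≤ d) (h2 : d + 3 * b ≤ a + c) :
    phiD a c b d = 3 * a + c - (5 * b + d) := by
  unfold phiD; rw [if_pos h1, if_pos h2]
lemma phiB_1b (h1 : 2 * (a - b) ≤ d) (h2 : ¬ d + 3 * b ≤ a + c) :
    phiB a c b d = (2 * a + c - (2 * b + d)) - ((3 * a + c - (3 * b + d)) + 1) / 2 := by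
  unfold phiB; rw [if_pos h1, if_neg h2]
lemma phiD_1b (h1 : 2 * (a - b) ≤ d) (h2 : ¬ d + 3 * b ≤ a + c) :
    phiD a c b d = (3 * a + c - (3 * b + d)) -
      2 * ((2 * a + c - (2 * b + d)) - ((3 * a + c - (3 * b + d)) + 1) / 2) := by
  unfold phiD; rw [if_pos h1, if_neg h2, phiB_1b h1 h2]
lemma phiB_2a (h1 : ¬ 2 * (a - b) ≤ d) (h2 : 2 * b + (d + 1) / 2 ≤ c) :
    phiB a c b d = a - d / 2 := by
  unfold phiB; rw [if_neg h1, if_pos h2]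
lemma phiD_2a (h1 : ¬ 2 * (a - b) ≤ d) (h2 : 2 * b + (d + 1) / 2 ≤ c) :
    phiD a c b d = c + 3 * (d / 2) - (2 * b + d) := by
  unfold phiD; rw [if_neg h1, if_pos h2]
lemma phiB_2b (h1 : ¬ 2 * (a - b) ≤ d) (h2 : ¬ 2 * b + (d + 1) / 2 ≤ c) :
    phiB a c b d = (2 * a + c - (2 * b + d)) -
      ((2 * a + c - (2 * b + (d + 1) / 2)) + 1) / 2 := by
  unfold phiB; rw [if_neg h1, if_neg h2]
lemma phiD_2b (h1 : ¬ 2 * (a - b) ≤ d) (h2 : ¬ 2 * b + (d + 1) / 2 ≤ c) :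
    phiD a c b d = (2 * a + c - (2 * b + (d + 1) / 2)) -
      2 * ((2 * a + c - (2 * b + d)) - ((2 * a + c - (2 * b + (d + 1) / 2)) + 1) / 2) := by
  unfold phiD; rw [if_neg h1, if_neg h2, phiB_2b h1 h2]

lemma phi_mem (hac : a ≤ c) (hb : b ≤ a) (hd : d ≤ a - b + c) :
    phiB a c b d ≤ a ∧ phiD a c b d ≤ a - phiB a c b d + c := by
  by_cases h1 : 2 * (a - b) ≤ d
  · by_cases h2 : d + 3 * b ≤ a + c
    · rw [phiB_1a h1 h2, phiD_1a h1 h2]; constructor <;> omega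
    · rw [phiB_1b h1 h2, phiD_1b h1 h2]; constructor <;> omega
  · by_cases h2 : 2 * b + (d + 1) / 2 ≤ c
    · rw [phiB_2a h1 h2, phiD_2a h1 h2]; constructor <;> omega
    · rw [phiB_2b h1 h2, phiD_2b h1 h2]; constructor <;> omega

lemma phi_invol (hac : a ≤ c) (hb : b ≤ a) (hd : d ≤ a - b + c) :
    phiB a c (phiB a c b d) (phiD a c b d) = b ∧
    phiD a c (phiB a c b d) (phiD a c b d) = d := by
  by_cases h1 : 2 * (a - b) ≤ d
  · by_cases h2 : d + 3 * b ≤ a + c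
    · rw [phiB_1a h1 h2, phiD_1a h1 h2]
      have g1 : 2 * (a - b) ≤ 3 * a + c - (5 * b + d) := by omega
      have g2 : (3 * a + c - (5 * b + d)) + 3 * b ≤ a + c := by omega
      rw [phiB_1a g1 g2, phiD_1a g1 g2]; constructor <;> omega
    · rw [phiB_1b h1 h2, phiD_1b h1 h2]
      have g1 : ¬ 2 * (a - ((2 * a + c - (2 * b + d)) - ((3 * a + c - (3 * b + d)) + 1) / 2)) ≤
          (3 * a + c - (3 * b + d)) -
            2 * ((2 * a + c - (2 * b + d)) - ((3 * a + c - (3 * b + d)) + 1) / 2) := by omega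
      have g2 : 2 * ((2 * a + c - (2 * b + d)) - ((3 * a + c - (3 * b + d)) + 1) / 2) +
          (((3 * a + c - (3 * b + d)) -
            2 * ((2 * a + c - (2 * b + d)) - ((3 * a + c - (3 * b + d)) + 1) / 2)) + 1) / 2 ≤ c := by
        omega
      rw [phiB_2a g1 g2, phiD_2a g1 g2]; clear g1 g2; constructor <;> omega
  · by_cases h2 : 2 * b + (d + 1) / 2 ≤ c
    · rw [phiB_2a h1 h2, phiD_2a h1 h2]
      have g1 : 2 * (a - (a - d / 2)) ≤ c + 3 * (d / 2) - (2 * b + d) := by omega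
      have g2 : ¬ (c + 3 * (d / 2) - (2 * b + d)) + 3 * (a - d / 2) ≤ a + c := by omega
      rw [phiB_1b g1 g2, phiD_1b g1 g2]; clear g1 g2; constructor <;> omega
    · rw [phiB_2b h1 h2, phiD_2b h1 h2]
      have g1 : ¬ 2 * (a - ((2 * a + c - (2 * b + d)) -
          ((2 * a + c - (2 * b + (d + 1) / 2)) + 1) / 2)) ≤
          (2 * a + c - (2 * b + (d + 1) / 2)) -
            2 * ((2 * a + c - (2 * b + d)) - ((2 * a + c - (2 * b + (d + 1) / 2)) + 1) / 2) := by
        omega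
      have g2 : ¬ 2 * ((2 * a + c - (2 * b + d)) -
          ((2 * a + c - (2 * b + (d + 1) / 2)) + 1) / 2) +
          (((2 * a + c - (2 * b + (d + 1) / 2)) -
            2 * ((2 * a + c - (2 * b + d)) - ((2 * a + c - (2 * b + (d + 1) / 2)) + 1) / 2)) + 1) / 2
            ≤ c := by omega
      rw [phiB_2b g1 g2, phiD_2b g1 g2]; clear g1 g2; constructor <;> omega

lemma phi_stat (hac : a ≤ c) (hb : b ≤ a) (hd : d ≤ a - b + c) :
    ((2 * (a : ℤ) - 2 * b + c - d) =
      (if 2 * ((a : ℤ) - phiB a c b d) ≤ (phiD a c b d : ℤ)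
       then 3 * (phiB a c b d : ℤ) + phiD a c b d - a
       else 2 * (phiB a c b d : ℤ) + (((phiD a c b d + 1) / 2 : ℕ) : ℤ))) ∧
    ((if 2 * ((a : ℤ) - b) ≤ (d : ℤ) then 3 * (b : ℤ) + d - a
      else 2 * (b : ℤ) + (((d + 1) / 2 : ℕ) : ℤ)) =
      2 * (a : ℤ) - 2 * (phiB a c b d) + c - phiD a c b d) := by
  by_cases h1 : 2 * (a - b) ≤ d
  · by_cases h2 : d + 3 * b ≤ a + c
    · rw [phiB_1a h1 h2, phiD_1a h1 h2]
      constructor <;> split_ifs <;> omega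
    · rw [phiB_1b h1 h2, phiD_1b h1 h2]
      constructor <;> split_ifs <;> omega
  · by_cases h2 : 2 * b + (d + 1) / 2 ≤ c
    · rw [phiB_2a h1 h2, phiD_2a h1 h2]
      constructor <;> split_ifs <;> omega
    · rw [phiB_2b h1 h2, phiD_2b h1 h2]
      constructor <;> split_ifs <;> omega

end phi

lemma ceil_half (d : ℕ) : ⌈(d : ℚ) / 2⌉ = (((d + 1) / 2 : ℕ) : ℤ) := by
  rcases Nat.even_or_odd d with ⟨k, hk⟩ | ⟨k, hk⟩
  · subst hk
    have h1 : ((k + k : ℕ) : ℚ) / 2 = (k : ℚ) := by push_cast; ring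
    rw [h1, Int.ceil_natCast]
    omega
  · subst hk
    have h2 : ((2 * k + 1 : ℕ) : ℚ) / 2 = (k : ℚ) + 1 / 2 := by push_cast; ring
    have h3 : ⌈(k : ℚ) + 1 / 2⌉ = (k : ℤ) + 1 := by
      rw [Int.ceil_eq_iff]
      push_cast
      constructor <;> norm_num
    rw [h2, h3]
    omega

theorem stmt_14 (a c e : ℕ) (hac : a ≤ c) (q t : ℚ) :
    (∑ b ∈ Finset.range (a + 1), ∑ d ∈ Finset.range (a - b + c + 1),
        q ^ (2 * (a : ℤ) - 2 * b + c - d) *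
          t ^ (if 2 * ((a : ℤ) - b) ≤ (d : ℤ) then 3 * (b : ℤ) + d - a
               else 2 * (b : ℤ) + ⌈(d : ℚ) / 2⌉)) =
      ∑ b ∈ Finset.range (a + 1), ∑ d ∈ Finset.range (a - b + c + 1),
        t ^ (2 * (a : ℤ) - 2 * b + c - d) *
          q ^ (if 2 * ((a : ℤ) - b) ≤ (d : ℤ) then 3 * (b : ℤ) + d - a
               else 2 * (b : ℤ) + ⌈(d : ℚ) / 2⌉) := by
  rw [Finset.sum_sigma', Finset.sum_sigma']
  refine Finset.sum_nbij' (fun p => ⟨phiB a c p.1 p.2, phiD a c p.1 p.2⟩)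
    (fun p => ⟨phiB a c p.1 p.2, phiD a c p.1 p.2⟩) ?_ ?_ ?_ ?_ ?_
  · rintro ⟨b, d⟩ hp
    simp only [Finset.mem_sigma, Finset.mem_range] at hp ⊢
    have := phi_mem hac (by omega : b ≤ a) (by omega : d ≤ a - b + c)
    omega
  · rintro ⟨b, d⟩ hp
    simp only [Finset.mem_sigma, Finset.mem_range] at hp ⊢
    have := phi_mem hac (by omega : b ≤ a) (by omega : d ≤ a - b + c)
    omega
  · rintro ⟨b, d⟩ hp
    simp only [Finset.mem_sigma, Finset.mem_range] at hp
    have h := phi_invol hac (by omega : b ≤ a) (by omega : d ≤ a - b + c)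
    simp only [h.1, h.2]
  · rintro ⟨b, d⟩ hp
    simp only [Finset.mem_sigma, Finset.mem_range] at hp
    have h := phi_invol hac (by omega : b ≤ a) (by omega : d ≤ a - b + c)
    simp only [h.1, h.2]
  · rintro ⟨b, d⟩ hp
    simp only [Finset.mem_sigma, Finset.mem_range] at hp
    have h := phi_stat hac (by omega : b ≤ a) (by omega : d ≤ a - b + c)
    simp only [ceil_half]
    rw [← h.1, h.2, mul_comm]
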